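/- arXiv:2008.03932 — 3 statements merged into one kernel-verified Lean document; each statement's English description precedes it below -/
import Mathlib

section
/- For every sequence (a_n) of real numbers in [0,1], every ε > 0, and every function g : ℕ → ℕ, there exists N ≤ (g^M)^(⌈1/ε⌉)(0) such that for all s ≤ g(N), a_N ≤ a_s + ε, where g^M(n) := max_{i ≤ n} g(i) and (g^M)^(k) denotes the k-fold iterate of g^M. -/
/-!
If no `N ≤ (g^M)^(k) 0` works, then every such `N` has some `s ≤ g N` with `a s + ε < a N`.
Starting from `0` and following these witnesses gives a chain whose `i`-th term is at most
`(g^M)^(i) 0` while `a` drops by more than `ε` at every step; after `⌈1/ε⌉ + 1` steps `a` has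
dropped by more than `1`, which is impossible for a sequence with values in `[0, 1]`.
-/

/-- `iterMax g` is `g^M`, i.e. `g^M(n) = max_{i ≤ n} g(i)`. -/
def iterMax (g : ℕ → ℕ) (n : ℕ) : ℕ := Finset.sup (Finset.range (n+1)) g

lemma le_iterMax (g : ℕ → ℕ) (n : ℕ) : g n ≤ iterMax g n :=
  Finset.le_sup (Finset.self_mem_range_succ n)

lemma iterMax_mono (g : ℕ → ℕ) : Monotone (iterMax g) := fun _ _ h =>
  Finset.sup_mono (Finset.range_subset_range.2 (Nat.succ_le_succ h))

theorem exists_le_iterate_add_nsmul_le {α : Type*} [AddCommMonoid α] [PartialOrder α]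
    [IsOrderedAddMonoid α] {f g : ℕ → ℕ} (hf : Monotone f) (hgf : ∀ n, g n ≤ f n)
    {a : ℕ → α} {ε : α} {k : ℕ} (h : ∀ N ≤ f^[k] 0, ∃ s ≤ g N, a s + ε ≤ a N) :
    ∃ m ≤ f^[k] 0, a m + k • ε ≤ a 0 := by
  induction k with
  | zero => exact ⟨0, le_rfl, by simp⟩
  | succ k ih =>
    have hstep : f^[k] 0 ≤ f^[k + 1] 0 :=
      hf.monotone_iterate_of_le_map (Nat.zero_le _) k.le_succ
    obtain ⟨m, hm, ham⟩ := ih fun N hN => h N (hN.trans hstep)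
    obtain ⟨s, hs, has⟩ := h m (hm.trans hstep)
    refine ⟨s, ?_, ?_⟩
    · rw [Function.iterate_succ_apply']
      exact (hs.trans (hgf m)).trans (hf hm)
    · calc a s + (k + 1) • ε = a s + ε + k • ε := by rw [succ_nsmul', add_assoc]
        _ ≤ a m + k • ε := by gcongr
        _ ≤ a 0 := ham

theorem stmt0 (a : ℕ → ℝ) (ha : ∀ n, a n ∈ Set.Icc (0:ℝ) 1)
    (ε : ℝ) (hε : 0 < ε) (g : ℕ → ℕ) :
    ∃ N ≤ (iterMax g)^[⌈1/ε⌉₊] 0, ∀ s ≤ g N, a N ≤ a s + ε := by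
  by_contra! hdescent
  obtain ⟨m, hm, ham⟩ := exists_le_iterate_add_nsmul_le (iterMax_mono g) (le_iterMax g)
    fun N hN => (hdescent N hN).imp fun _ ⟨hs, has⟩ => ⟨hs, has.le⟩
  obtain ⟨s, -, has⟩ := hdescent m hm
  have hkε : 1 ≤ (⌈1/ε⌉₊ : ℝ) * ε := (div_le_iff₀ hε).1 (Nat.le_ceil _)
  rw [nsmul_eq_mul] at ham
  linarith [(ha s).1, (ha 0).2]
end

section
/- Let X be a Banach space with modulus of uniform convexity η, i.e., η : (0,∞) → (0,1] satisfies: for all ε > 0 and all x, y ∈ X with ‖x‖ ≤ 1, ‖y‖ ≤ 1 and ‖x−y‖ ≥ ε, one has ‖(x+y)/2‖ ≤ 1 − η(ε). Define u(ε) := (ε/2)·η(ε). Then for any ε > 0 and any x, y ∈ X with ‖x‖ ≤ ‖y‖ ≤ 1 and ‖x−y‖ ≥ ε, one has ‖(x+y)/2‖ ≤ ‖y‖ − u(ε). -/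
/-! If `‖x‖ ≤ ‖y‖ = r`, rescaling by `r⁻¹ ≥ 1` moves `x, y` into the unit ball without shrinking
their distance, so the modulus gives `‖(x + y)/2‖ ≤ r (1 - η ε)`; and `r ≥ ε/2` because
`ε ≤ ‖x - y‖ ≤ 2r`. -/

theorem norm_inv_two_smul_add_le_of_norm_le {X : Type*} [NormedAddCommGroup X] [NormedSpace ℝ X]
    {ε δ r : ℝ}
    (hmod : ∀ x y : X, ‖x‖ ≤ 1 → ‖y‖ ≤ 1 → ε ≤ ‖x - y‖ → ‖(2:ℝ)⁻¹ • (x + y)‖ ≤ 1 - δ)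
    (hr : 0 < r) (hr1 : r ≤ 1) {x y : X} (hx : ‖x‖ ≤ r) (hy : ‖y‖ ≤ r) (hdist : ε ≤ ‖x - y‖) :
    ‖(2:ℝ)⁻¹ • (x + y)‖ ≤ r * (1 - δ) := by
  have norm_inv_smul (z : X) : ‖r⁻¹ • z‖ = r⁻¹ * ‖z‖ := by
    rw [norm_smul, norm_inv, Real.norm_of_nonneg hr.le]
  have hx' : ‖r⁻¹ • x‖ ≤ 1 := by
    rw [norm_inv_smul, inv_mul_le_one₀ hr]; exact hx
  have hy' : ‖r⁻¹ • y‖ ≤ 1 := by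
    rw [norm_inv_smul, inv_mul_le_one₀ hr]; exact hy
  have hdist' : ε ≤ ‖r⁻¹ • x - r⁻¹ • y‖ := by
    rw [← smul_sub, norm_inv_smul]
    exact hdist.trans (le_mul_of_one_le_left (norm_nonneg _) (one_le_inv₀ hr |>.mpr hr1))
  have key := hmod _ _ hx' hy' hdist'
  rwa [← smul_add, smul_comm, norm_inv_smul, inv_mul_le_iff₀ hr] at key

theorem stmt3_general {X : Type*} [NormedAddCommGroup X] [NormedSpace ℝ X]
    (η : ℝ → ℝ) (hηrange : ∀ ε > (0:ℝ), η ε ∈ Set.Ioc (0:ℝ) 1)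
    (hmod : ∀ ε > (0:ℝ), ∀ x y : X, ‖x‖ ≤ 1 → ‖y‖ ≤ 1 → ε ≤ ‖x - y‖ →
      ‖(2:ℝ)⁻¹ • (x + y)‖ ≤ 1 - η ε)
    (ε : ℝ) (hε : 0 < ε) (x y : X)
    (hxy : ‖x‖ ≤ ‖y‖) (hy : ‖y‖ ≤ 1) (hdist : ε ≤ ‖x - y‖) :
    ‖(2:ℝ)⁻¹ • (x + y)‖ ≤ ‖y‖ - (ε/2) * η ε := by
  have hεy : ε / 2 ≤ ‖y‖ := by linarith [norm_sub_le x y]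
  have hη : 0 ≤ η ε := (hηrange ε hε).1.le
  calc ‖(2:ℝ)⁻¹ • (x + y)‖ ≤ ‖y‖ * (1 - η ε) :=
        norm_inv_two_smul_add_le_of_norm_le (hmod ε hε) (by linarith) hy hxy le_rfl hdist
    _ ≤ ‖y‖ - (ε/2) * η ε := by nlinarith

theorem stmt3 {X : Type*} [NormedAddCommGroup X] [NormedSpace ℝ X] [CompleteSpace X]
    (η : ℝ → ℝ) (hηrange : ∀ ε > (0:ℝ), η ε ∈ Set.Ioc (0:ℝ) 1)
    (hmod : ∀ ε > (0:ℝ), ∀ x y : X, ‖x‖ ≤ 1 → ‖y‖ ≤ 1 → ε ≤ ‖x - y‖ →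
      ‖(2:ℝ)⁻¹ • (x + y)‖ ≤ 1 - η ε)
    (ε : ℝ) (hε : 0 < ε) (x y : X)
    (hxy : ‖x‖ ≤ ‖y‖) (hy : ‖y‖ ≤ 1) (hdist : ε ≤ ‖x - y‖) :
    ‖(2:ℝ)⁻¹ • (x + y)‖ ≤ ‖y‖ - (ε/2) * η ε :=
  stmt3_general η hηrange hmod ε hε x y hxy hy hdist
end

section
/- Let X be a Banach space, d ≥ 1, and T_1, ..., T_d : X → X commuting linear operators with ‖T_l y‖ ≤ ‖y‖ for all y ∈ X and all l. Let x ∈ X with ‖x‖ ≤ 1, and for n ∈ ℕ put x_n := (n+1)^(−d) Σ_{k ∈ [0,n]^d} T^k x, where T^k x := T_1^{k_1} ⋯ T_d^{k_d} x. Let Q ∈ ℕ, (c_j)_{j ∈ [0,Q]^d} ⊆ [0,1] with Σ_j c_j = 1, and set z := Σ_{j ∈ [0,Q]^d} c_j T^j x and z_n := (n+1)^(−d) Σ_{i ∈ [0,n]^d} T^i z. Then for all n ≥ Q, ‖x_n − z_n‖ ≤ 2^d Q / (n+1). -/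
/-- `box d n` is `[0,n]^d`. -/
def box (d n : ℕ) : Finset (Fin d → ℕ) := Fintype.piFinset fun _ => Finset.range (n+1)

/-- `Tpow T k = T₁^{k₁} ⋯ T_d^{k_d}`. -/
def Tpow {X : Type*} [AddCommGroup X] [Module ℝ X] {d : ℕ}
    (T : Fin d → X →ₗ[ℝ] X) (k : Fin d → ℕ) : X →ₗ[ℝ] X :=
  (List.ofFn fun l => T l ^ k l).prod

/-- The multi-parameter ergodic average `x_n = (n+1)^{-d} ∑_{k ∈ [0,n]^d} T^k x`. -/
noncomputable def erg {X : Type*} [AddCommGroup X] [Module ℝ X] {d : ℕ}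
    (T : Fin d → X →ₗ[ℝ] X) (x : X) (n : ℕ) : X :=
  ((n+1 : ℝ)^d)⁻¹ • ∑ k ∈ box d n, Tpow T k x

/-!
Since the `T_l` commute, `T^k z = ∑_j c_j T^{k+j} x`, so `x_n - z_n` is the convex combination
`∑_j c_j (x_n - (T^j x)_n)`. Each `x_n - (T^j x)_n` is `(n+1)^{-d}` times the difference of the sums of
`T^k x` over the box `[0,n]^d` and over its translate by `j`; only the indices outside their
intersection, which contains `j + [0,n-Q]^d`, contribute, each with norm at most `1`. This gives
`‖x_n - (T^j x)_n‖ ≤ 2 (1 - (1 - Q/(n+1))^d) ≤ 2 d Q/(n+1)` by Bernoulli's inequality, and `2 d ≤ 2^d`.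
-/

open scoped Finset

def contractionSubmonoid (R E : Type*) [Semiring R] [SeminormedAddCommGroup E] [Module R E] :
    Submonoid (Module.End R E) where
  carrier := {f | ∀ y, ‖f y‖ ≤ ‖y‖}
  mul_mem' hf hg y := (hf _).trans (hg y)
  one_mem' _ := le_rfl

lemma norm_sum_sub_sum_le_card_sdiff {ι E : Type*} [DecidableEq ι] [SeminormedAddCommGroup E]
    (s t : Finset ι) {f : ι → E} {C : ℝ} (hf : ∀ i, ‖f i‖ ≤ C) :
    ‖∑ i ∈ s, f i - ∑ i ∈ t, f i‖ ≤ (#(s \ t) + #(t \ s)) * C := by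
  rw [← Finset.sum_sdiff_sub_sum_sdiff, add_mul]
  have hbound : ∀ u : Finset ι, ‖∑ i ∈ u, f i‖ ≤ #u * C := fun u => by
    simpa using norm_sum_le_of_le u fun i _ => hf i
  exact (norm_sub_le _ _).trans (add_le_add (hbound _) (hbound _))

lemma mem_box {d n : ℕ} {k : Fin d → ℕ} : k ∈ box d n ↔ ∀ l, k l ≤ n := by
  simp [box]

lemma card_box (d n : ℕ) : #(box d n) = (n + 1) ^ d := by
  simp [box]

section Translate

variable {d n Q : ℕ} {j : Fin d → ℕ}

lemma image_add_box_sub_subset_inter (hj : j ∈ box d Q) (hQn : Q ≤ n) :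
    (box d (n - Q)).image (· + j) ⊆ box d n ∩ (box d n).image (· + j) := by
  intro m hm
  obtain ⟨k, hk, rfl⟩ := Finset.mem_image.1 hm
  have hk := mem_box.1 hk
  have hj := mem_box.1 hj
  refine Finset.mem_inter.2 ⟨mem_box.2 fun l => ?_, Finset.mem_image.2 ⟨k, mem_box.2 fun l => ?_, rfl⟩⟩
  · have := hk l; have := hj l
    simp only [Pi.add_apply]
    omega
  · have := hk l
    omega

lemma card_sdiff_add_card_sdiff_image_add_box_le (hj : j ∈ box d Q) (hQn : Q ≤ n) :
    #(box d n \ (box d n).image (· + j)) + #((box d n).image (· + j) \ box d n)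
      + 2 * (n - Q + 1) ^ d ≤ 2 * (n + 1) ^ d := by
  have hinj : Function.Injective (· + j) := add_left_injective j
  have hinter := Finset.card_le_card (image_add_box_sub_subset_inter hj hQn)
  rw [Finset.card_image_of_injective _ hinj, card_box] at hinter
  have himage : #((box d n).image (· + j)) = (n + 1) ^ d := by
    rw [Finset.card_image_of_injective _ hinj, card_box]
  have h1 := Finset.card_sdiff_add_card_inter (box d n) ((box d n).image (· + j))
  have h2 := Finset.card_sdiff_add_card_inter ((box d n).image (· + j)) (box d n)
  rw [Finset.inter_comm, himage] at h2
  rw [card_box] at h1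
  omega

end Translate

section Average

variable {X : Type*} [AddCommGroup X] [Module ℝ X] {d : ℕ} (T : Fin d → X →ₗ[ℝ] X)

open scoped IsMulCommutative in
lemma Tpow_add (hcomm : ∀ l m, Commute (T l) (T m)) (k j : Fin d → ℕ) :
    Tpow T (k + j) = Tpow T k * Tpow T j := by
  -- compute in the submonoid generated by the `T l`, which is commutative
  let M := Submonoid.closure (Set.range T)
  have : IsMulCommutative M := Submonoid.isMulCommutative_closure _ <| by
    rintro _ ⟨l, rfl⟩ _ ⟨m, rfl⟩
    exact hcomm l m
  let t : Fin d → M := fun l => ⟨T l, Submonoid.subset_closure ⟨l, rfl⟩⟩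
  have hTpow : ∀ k, Tpow T k = ((∏ l, t l ^ k l : M) : X →ₗ[ℝ] X) := fun k => by
    rw [← Fin.prod_ofFn, Submonoid.coe_list_prod, List.map_ofFn]
    rfl
  simp only [hTpow, Pi.add_apply, pow_add, Finset.prod_mul_distrib, Submonoid.coe_mul]

lemma Tpow_mem {S : Submonoid (Module.End ℝ X)} (hT : ∀ l, T l ∈ S) (k : Fin d → ℕ) :
    Tpow T k ∈ S :=
  S.list_prod_mem fun _ hf => by
    obtain ⟨l, rfl⟩ := List.mem_ofFn.1 hf
    exact S.pow_mem (hT l) _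

lemma erg_sum_smul {ι : Type*} (s : Finset ι) (c : ι → ℝ) (y : ι → X) (n : ℕ) :
    erg T (∑ i ∈ s, c i • y i) n = ∑ i ∈ s, c i • erg T (y i) n := by
  have hlin : ∀ y, erg T y n = (((n + 1 : ℝ) ^ d)⁻¹ • ∑ k ∈ box d n, Tpow T k) y := fun y => by
    simp [erg]
  simp only [hlin, map_sum, map_smul]

end Average

section Estimate

variable {X : Type*} [NormedAddCommGroup X] [NormedSpace ℝ X] {d : ℕ} {T : Fin d → X →ₗ[ℝ] X}

lemma erg_sub_erg_Tpow (hcomm : ∀ l m, Commute (T l) (T m)) (x : X) (n : ℕ) (j : Fin d → ℕ) :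
    erg T x n - erg T (Tpow T j x) n = ((n + 1 : ℝ) ^ d)⁻¹ •
      (∑ k ∈ box d n, Tpow T k x - ∑ k ∈ (box d n).image (· + j), Tpow T k x) := by
  rw [Finset.sum_image fun _ _ _ _ h => add_left_injective j h, erg, erg, smul_sub]
  simp only [Tpow_add T hcomm, Module.End.mul_apply]

lemma norm_erg_sub_erg_Tpow_le (hcomm : ∀ l m, Commute (T l) (T m))
    (hcontr : ∀ l, T l ∈ contractionSubmonoid ℝ X) {x : X} (hx : ‖x‖ ≤ 1)
    {n Q : ℕ} (hQn : Q ≤ n) {j : Fin d → ℕ} (hj : j ∈ box d Q) :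
    ‖erg T x n - erg T (Tpow T j x) n‖ ≤ 2 * d * Q / (n + 1) := by
  have hpos : (0 : ℝ) < n + 1 := by positivity
  have hdiff := norm_sum_sub_sum_le_card_sdiff (box d n) ((box d n).image (· + j))
    (f := fun k => Tpow T k x) fun k => (Tpow_mem T hcontr k x).trans hx
  have hcard : (#(box d n \ (box d n).image (· + j)) + #((box d n).image (· + j) \ box d n) : ℝ)
      ≤ 2 * ((n + 1) ^ d - (n - Q + 1) ^ d) := by
    have h := Nat.cast_le (α := ℝ).2 (card_sdiff_add_card_sdiff_image_add_box_le hj hQn)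
    push_cast [Nat.cast_sub hQn] at h
    linarith
  have hbernoulli := one_add_mul_le_pow (a := -(Q / (n + 1) : ℝ))
    (by rw [neg_le_neg_iff, div_le_iff₀ hpos]; norm_cast; omega) d
  rw [erg_sub_erg_Tpow hcomm, norm_smul, Real.norm_of_nonneg (by positivity)]
  calc ((n + 1 : ℝ) ^ d)⁻¹ * ‖∑ k ∈ box d n, Tpow T k x - ∑ k ∈ (box d n).image (· + j), Tpow T k x‖
      ≤ ((n + 1 : ℝ) ^ d)⁻¹ * (2 * ((n + 1) ^ d - (n - Q + 1) ^ d)) := by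
        gcongr
        exact hdiff.trans (by rwa [mul_one])
    _ = 2 * (1 - (1 + -(Q / (n + 1) : ℝ)) ^ d) := by
        have hratio : 1 + -(Q / (n + 1) : ℝ) = (n - Q + 1) / (n + 1) := by field_simp; ring
        rw [hratio, div_pow]
        field_simp
    _ ≤ 2 * d * Q / (n + 1) := by
        rw [mul_div_assoc, mul_assoc]
        linarith

end Estimate

theorem stmt6_general {X : Type*} [NormedAddCommGroup X] [NormedSpace ℝ X]
    (d : ℕ) (T : Fin d → X →ₗ[ℝ] X)
    (hcomm : ∀ l m, T l ∘ₗ T m = T m ∘ₗ T l)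
    (hcontr : ∀ l (y : X), ‖T l y‖ ≤ ‖y‖)
    (x : X) (hx : ‖x‖ ≤ 1)
    (Q : ℕ) (c : (Fin d → ℕ) → ℝ) (hc : ∀ j ∈ box d Q, c j ∈ Set.Icc (0:ℝ) 1)
    (hsum : ∑ j ∈ box d Q, c j = 1) :
    ∀ n, Q ≤ n →
      ‖erg T x n - erg T (∑ j ∈ box d Q, c j • Tpow T j x) n‖ ≤ 2^d * Q / (n+1) := by
  intro n hQn
  have hball : ∀ j ∈ box d Q, erg T (Tpow T j x) n ∈
      Metric.closedBall (erg T x n) (2 * d * Q / (n + 1)) := fun j hj => by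
    rw [Metric.mem_closedBall', dist_eq_norm]
    exact norm_erg_sub_erg_Tpow_le hcomm hcontr hx hQn hj
  have hconv := (convex_closedBall _ _).sum_mem (fun j hj => (hc j hj).1) hsum hball
  rw [← erg_sum_smul, Metric.mem_closedBall', dist_eq_norm] at hconv
  refine hconv.trans ?_
  gcongr
  exact_mod_cast Nat.mul_le_pow (by norm_num) d

theorem stmt6 {X : Type*} [NormedAddCommGroup X] [NormedSpace ℝ X] [CompleteSpace X]
    (d : ℕ) (hd : 1 ≤ d) (T : Fin d → X →ₗ[ℝ] X)
    (hcomm : ∀ l m, T l ∘ₗ T m = T m ∘ₗ T l)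
    (hcontr : ∀ l (y : X), ‖T l y‖ ≤ ‖y‖)
    (x : X) (hx : ‖x‖ ≤ 1)
    (Q : ℕ) (c : (Fin d → ℕ) → ℝ) (hc : ∀ j ∈ box d Q, c j ∈ Set.Icc (0:ℝ) 1)
    (hsum : ∑ j ∈ box d Q, c j = 1) :
    ∀ n, Q ≤ n →
      ‖erg T x n - erg T (∑ j ∈ box d Q, c j • Tpow T j x) n‖ ≤ 2^d * Q / (n+1) :=
  stmt6_general d T hcomm hcontr x hx Q c hc hsum
end
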